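/- arXiv:2604.14040 — 2 statements merged into one kernel-verified Lean document; each statement's English description precedes it below -/
import Mathlib

section
/- p-norm expansion of the trace-free part: let A_k ∈ End(V_k) be diagonalizable with integer eigenvalues whose multiplicity function satisfies tr(A_k^j) = (∫_P G^j) k^{n+j} + o(k^{n+j}) for all j ≤ p and dim V_k = vol(P) k^n + o(k^n), for a convex body P ⊂ ℝ^n and an integrable function G on P. Then ‖A̲_k‖_p^p = tr((A_k − (tr A_k / dim V_k) id)^p) = vol(P)·(1/vol(P)) ∫_P (G − Ḡ)^p · k^{n+p} + o(k^{n+p}), where Ḡ = ∫_P G / vol(P). -/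
open Filter MeasureTheory Asymptotics
open scoped Topology

lemma trace_binom {m : ℕ} (A : Matrix (Fin m) (Fin m) ℝ) (c : ℝ) (q : ℕ) :
    ((A - c • 1) ^ q).trace
      = ∑ j ∈ Finset.range (q + 1), (q.choose j : ℝ) * (-c) ^ (q - j) * (A ^ j).trace := by
  have hcomm : Commute A ((-c) • (1 : Matrix (Fin m) (Fin m) ℝ)) :=
    (Commute.one_right A).smul_right _
  have h : A - c • 1 = A + (-c) • (1 : Matrix (Fin m) (Fin m) ℝ) := by
    rw [neg_smul, sub_eq_add_neg]
  rw [h, hcomm.add_pow, Matrix.trace_sum]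
  refine Finset.sum_congr rfl fun j hj => ?_
  have hcast : (q.choose j : ℝ) • (1 : Matrix (Fin m) (Fin m) ℝ)
      = ((q.choose j : ℕ) : Matrix (Fin m) (Fin m) ℝ) := by
    rw [Nat.cast_smul_eq_nsmul, nsmul_eq_mul, mul_one]
  rw [smul_pow, one_pow, ← hcast, Matrix.mul_smul, Matrix.mul_smul, mul_one, smul_smul,
    Matrix.trace_smul, smul_eq_mul, mul_one, mul_assoc]

lemma o_of_tendsto (e : ℕ) (a : ℝ) (f : ℕ → ℝ)
    (h : Tendsto (fun k : ℕ => f k / (k : ℝ) ^ e) atTop (𝓝 a)) :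
    (fun k : ℕ => f k - a * (k : ℝ) ^ e) =o[atTop] fun k : ℕ => (k : ℝ) ^ e := by
  have hne : ∀ᶠ k : ℕ in atTop, ((k : ℝ) ^ e) ≠ 0 := by
    filter_upwards [eventually_ge_atTop 1] with k hk
    positivity
  rw [isLittleO_iff_tendsto']
  · have h1 := h.sub_const a
    rw [sub_self] at h1
    refine h1.congr' ?_
    filter_upwards [hne] with k hk
    field_simp
  · filter_upwards [hne] with k hk h0
    exact absurd h0 hk

lemma tendsto_of_o (e : ℕ) (a : ℝ) (f : ℕ → ℝ)
    (h : (fun k : ℕ => f k - a * (k : ℝ) ^ e) =o[atTop] fun k : ℕ => (k : ℝ) ^ e) :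
    Tendsto (fun k : ℕ => f k / (k : ℝ) ^ e) atTop (𝓝 a) := by
  have hne : ∀ᶠ k : ℕ in atTop, ((k : ℝ) ^ e) ≠ 0 := by
    filter_upwards [eventually_ge_atTop 1] with k hk
    positivity
  have h2 : Tendsto (fun k : ℕ => (f k - a * (k : ℝ) ^ e) / (k : ℝ) ^ e) atTop (𝓝 0) :=
    h.tendsto_div_nhds_zero
  have h3 := h2.add_const a
  rw [zero_add] at h3
  refine h3.congr' ?_
  filter_upwards [hne] with k hk
  field_simp
  ring

lemma o_mul (n1 n2 : ℕ) (f g : ℕ → ℝ) (a b : ℝ)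
    (hf : (fun k : ℕ => f k - a * (k : ℝ) ^ n1) =o[atTop] fun k : ℕ => (k : ℝ) ^ n1)
    (hg : (fun k : ℕ => g k - b * (k : ℝ) ^ n2) =o[atTop] fun k : ℕ => (k : ℝ) ^ n2) :
    (fun k : ℕ => f k * g k - (a * b) * (k : ℝ) ^ (n1 + n2))
      =o[atTop] fun k : ℕ => (k : ℝ) ^ (n1 + n2) := by
  have hgO : (fun k : ℕ => g k) =O[atTop] fun k : ℕ => (k : ℝ) ^ n2 := by
    have h1 := hg.isBigO
    have h2 : (fun k : ℕ => b * (k : ℝ) ^ n2) =O[atTop] fun k : ℕ => (k : ℝ) ^ n2 :=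
      isBigO_const_mul_self b _ _
    have := h1.add h2
    simpa using this
  have hfO : (fun k : ℕ => a * (k : ℝ) ^ n1) =O[atTop] fun k : ℕ => (k : ℝ) ^ n1 :=
    isBigO_const_mul_self a _ _
  have h1 : (fun k : ℕ => (f k - a * (k : ℝ) ^ n1) * g k)
      =o[atTop] fun k : ℕ => (k : ℝ) ^ n1 * (k : ℝ) ^ n2 := hf.mul_isBigO hgO
  have h2 : (fun k : ℕ => (a * (k : ℝ) ^ n1) * (g k - b * (k : ℝ) ^ n2))
      =o[atTop] fun k : ℕ => (k : ℝ) ^ n1 * (k : ℝ) ^ n2 := hfO.mul_isLittleO hg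
  have h3 := h1.add h2
  have heq : (fun k : ℕ => (k : ℝ) ^ n1 * (k : ℝ) ^ n2) = fun k : ℕ => (k : ℝ) ^ (n1 + n2) := by
    funext k; rw [pow_add]
  rw [heq] at h3
  refine h3.congr_left fun k => ?_
  ring

/-- **p-norm expansion of the trace-free part.** -/
theorem trace_free_p_norm_expansion
    (n p : ℕ) (hp : 1 ≤ p)
    (P : Set (Fin n → ℝ)) (hconv : Convex ℝ P) (hcomp : IsCompact P)
    (hvol : 0 < (volume P).toReal)
    (G : (Fin n → ℝ) → ℝ)
    (hint : ∀ j : ℕ, j ≤ p → IntegrableOn (fun x => G x ^ j) P volume)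
    (d : ℕ → ℕ) (hd_pos : ∀ k, 0 < d k)
    (A : (k : ℕ) → Matrix (Fin (d k)) (Fin (d k)) ℝ)
    (hsymm : ∀ k, (A k).IsSymm)
    (htr : ∀ j : ℕ, j ≤ p →
      (fun k : ℕ => ((A k ^ j).trace - (∫ x in P, G x ^ j) * (k : ℝ) ^ (n + j)))
        =o[atTop] fun k : ℕ => (k : ℝ) ^ (n + j))
    (hd : (fun k : ℕ => ((d k : ℝ) - (volume P).toReal * (k : ℝ) ^ n))
        =o[atTop] fun k : ℕ => (k : ℝ) ^ n) :
    (fun k : ℕ =>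
        (((A k - ((A k).trace / (d k : ℝ)) • (1 : Matrix (Fin (d k)) (Fin (d k)) ℝ)) ^ p).trace
          - (∫ x in P, (G x - (∫ y in P, G y) / (volume P).toReal) ^ p) * (k : ℝ) ^ (n + p)))
      =o[atTop] fun k : ℕ => (k : ℝ) ^ (n + p) := by
  set vol : ℝ := (volume P).toReal with hvoldef
  set Gb : ℝ := (∫ y in P, G y) / vol with hGbdef
  set a : ℕ → ℝ := fun j => ∫ x in P, G x ^ j with hadef
  set c : ℕ → ℝ := fun k => (A k).trace / (d k : ℝ) with hcdef
  have hvne : vol ≠ 0 := ne_of_gt hvol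
  -- limit of c k / k
  have ht1 : Tendsto (fun k : ℕ => (A k ^ 1).trace / (k : ℝ) ^ (n + 1)) atTop (𝓝 (a 1)) :=
    tendsto_of_o (n + 1) (a 1) _ (htr 1 hp)
  have hdt : Tendsto (fun k : ℕ => (d k : ℝ) / (k : ℝ) ^ n) atTop (𝓝 vol) :=
    tendsto_of_o n vol _ hd
  have hcl : Tendsto (fun k : ℕ => c k / (k : ℝ) ^ 1) atTop (𝓝 Gb) := by
    have hdiv := ht1.div hdt hvne
    have hGb : a 1 / vol = Gb := by
      rw [hGbdef, hadef]
      simp [pow_one]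
    rw [hGb] at hdiv
    refine hdiv.congr' ?_
    filter_upwards [eventually_ge_atTop 1] with k hk
    have hkne : (k : ℝ) ≠ 0 := by positivity
    have hdne : ((d k : ℝ)) ≠ 0 := Nat.cast_ne_zero.mpr (hd_pos k).ne'
    simp only [Pi.div_apply, pow_one, pow_succ, hcdef]
    field_simp
    try ring
    try rw [mul_inv_cancel_right₀ hdne]
    simp
  have hc : (fun k : ℕ => c k - Gb * (k : ℝ) ^ 1) =o[atTop] fun k : ℕ => (k : ℝ) ^ 1 :=
    o_of_tendsto 1 Gb c hcl
  -- powers of -c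
  have hcm : ∀ m : ℕ, (fun k : ℕ => (-(c k)) ^ m - (-Gb) ^ m * (k : ℝ) ^ m)
      =o[atTop] fun k : ℕ => (k : ℝ) ^ m := by
    intro m
    induction m with
    | zero =>
      have h0 : (fun _ : ℕ => (0 : ℝ)) =o[atTop] fun k : ℕ => (k : ℝ) ^ 0 :=
        isLittleO_zero _ _
      refine h0.congr_left fun k => ?_
      simp
    | succ m ih =>
      have hneg : (fun k : ℕ => -(c k) - (-Gb) * (k : ℝ) ^ 1) =o[atTop]
          fun k : ℕ => (k : ℝ) ^ 1 := by
        refine hc.neg_left.congr_left fun k => ?_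
        ring
      have := o_mul m 1 (fun k => (-(c k)) ^ m) (fun k => -(c k)) ((-Gb) ^ m) (-Gb) ih hneg
      refine this.congr_left fun k => ?_
      simp only [pow_succ]
      try ring
  -- per-term asymptotics
  have hterm : ∀ j ∈ Finset.range (p + 1),
      (fun k : ℕ => (p.choose j : ℝ) * ((-(c k)) ^ (p - j) * (A k ^ j).trace)
          - (p.choose j : ℝ) * ((-Gb) ^ (p - j) * a j) * (k : ℝ) ^ (n + p))
        =o[atTop] fun k : ℕ => (k : ℝ) ^ (n + p) := by
    intro j hj
    have hjle : j ≤ p := Nat.lt_succ_iff.mp (Finset.mem_range.mp hj)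
    have h1 := o_mul (p - j) (n + j) (fun k => (-(c k)) ^ (p - j))
      (fun k => (A k ^ j).trace) ((-Gb) ^ (p - j)) (a j) (hcm (p - j)) (htr j hjle)
    have hexp : (p - j) + (n + j) = n + p := by omega
    rw [hexp] at h1
    have h2 := h1.const_mul_left (p.choose j : ℝ)
    refine h2.congr_left fun k => ?_
    ring
  have hsum := Asymptotics.IsLittleO.sum hterm
  -- integral identity
  have hIntEq : (∫ x in P, (G x - Gb) ^ p)
      = ∑ j ∈ Finset.range (p + 1), (p.choose j : ℝ) * ((-Gb) ^ (p - j) * a j) := by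
    have hpt : ∀ x, (G x - Gb) ^ p
        = ∑ j ∈ Finset.range (p + 1), G x ^ j * (-Gb) ^ (p - j) * (p.choose j : ℝ) := by
      intro x
      rw [sub_eq_add_neg, add_pow]
    simp only [hpt]
    rw [MeasureTheory.integral_finset_sum]
    · refine Finset.sum_congr rfl fun j hj => ?_
      rw [MeasureTheory.integral_mul_const, MeasureTheory.integral_mul_const]
      rw [hadef]
      ring
    · intro j hj
      have hjle : j ≤ p := Nat.lt_succ_iff.mp (Finset.mem_range.mp hj)
      exact ((hint j hjle).mul_const _).mul_const _
  -- assemble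
  have key : ∀ k : ℕ,
      (((A k - c k • (1 : Matrix (Fin (d k)) (Fin (d k)) ℝ)) ^ p).trace
          - (∫ x in P, (G x - Gb) ^ p) * (k : ℝ) ^ (n + p))
        = ∑ j ∈ Finset.range (p + 1),
            ((p.choose j : ℝ) * ((-(c k)) ^ (p - j) * (A k ^ j).trace)
              - (p.choose j : ℝ) * ((-Gb) ^ (p - j) * a j) * (k : ℝ) ^ (n + p)) := by
    intro k
    rw [trace_binom, hIntEq, Finset.sum_mul, ← Finset.sum_sub_distrib]
    exact Finset.sum_congr rfl fun j hj => by ring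
  exact hsum.congr' (Filter.Eventually.of_forall fun k => by rw [Finset.sum_apply]; exact (key k).symm) Filter.EventuallyEq.rfl
end

section
/- The L²-norm of a filtration F of the section ring, defined via the concave transform, satisfies ‖F‖₂² = (c₀a₀ − b₀²)/a₀², where a₀, b₀, c₀ are the leading coefficients of dim V_k = a₀k^n + o(k^n), w_F^1(k) = b₀k^{n+1} + o(k^{n+1}), and w_F^2(k) = c₀k^{n+2} + o(k^{n+2}), with w_F^p(k) = Σ_λ λ^p dim(F^λ V_k / F^{λ+1} V_k). -/
open Filter MeasureTheory
open scoped Topology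

/-- **L²-norm of a filtration.** Let `F` be a multiplicative linearly
bounded `ℤ`-filtration of a graded ring `⊕_k V_k` (encoded by the dimensions
`dimgr k λ = dim(F^λ V_k / F^{λ+1} V_k)`, supported on `S k`), with weight sums
`w_F^p(k) = Σ_λ λ^p dimgr k λ` and concave transform `G_F` on the Okounkov body
`P ⊂ ℝ^n` satisfying `∫_P G_F^p = lim_k w_F^p(k)/k^{n+p}`.  If
`dim V_k = a₀k^n + o(k^n)`, `w_F^1(k) = b₀k^{n+1} + o(k^{n+1})`,
`w_F^2(k) = c₀k^{n+2} + o(k^{n+2})` with `a₀ = vol(P)`, then the `L²`-norm of `F`,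
`‖F‖₂² = (1/vol P)∫_P (G_F − Ḡ_F)²`, equals `(c₀a₀ − b₀²)/a₀²`. -/
theorem filtration_L2_norm
    (n : ℕ) (P : Set (Fin n → ℝ))
    (GF : (Fin n → ℝ) → ℝ)
    (hint1 : IntegrableOn GF P volume)
    (hint2 : IntegrableOn (fun x => GF x ^ 2) P volume)
    (dimgr : ℕ → ℤ → ℕ) (S : ℕ → Finset ℤ)
    (hsupp : ∀ (k : ℕ) (l : ℤ), l ∉ S k → dimgr k l = 0)
    (d : ℕ → ℕ) (hd : ∀ k, (d k : ℤ) = ∑ l ∈ S k, (dimgr k l : ℤ))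
    (a₀ b₀ c₀ : ℝ) (ha₀ : 0 < a₀)
    (hvol : (volume P).toReal = a₀)
    (hdim : Tendsto (fun k : ℕ => (d k : ℝ) / (k : ℝ) ^ n) atTop (𝓝 a₀))
    (hw1 : Tendsto (fun k : ℕ =>
        (∑ l ∈ S k, (l : ℝ) ^ 1 * (dimgr k l : ℝ)) / (k : ℝ) ^ (n + 1)) atTop (𝓝 b₀))
    (hw2 : Tendsto (fun k : ℕ =>
        (∑ l ∈ S k, (l : ℝ) ^ 2 * (dimgr k l : ℝ)) / (k : ℝ) ^ (n + 2)) atTop (𝓝 c₀))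
    -- the concave transform computes the limits of the weight sums
    (hG1 : ∫ x in P, GF x = b₀)
    (hG2 : ∫ x in P, GF x ^ 2 = c₀) :
    (1 / a₀) * (∫ x in P, (GF x - (∫ y in P, GF y) / a₀) ^ 2) =
      (c₀ * a₀ - b₀ ^ 2) / a₀ ^ 2 := by
  have hfin : volume P ≠ ⊤ := by
    intro h
    rw [h] at hvol
    simp at hvol
    exact ha₀.ne' hvol.symm
  rw [hG1]
  set m : ℝ := b₀ / a₀ with hm
  have hconst : IntegrableOn (fun _ : Fin n → ℝ => m ^ 2) P volume :=
    integrableOn_const hfin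
  have hconst2 : IntegrableOn (fun x => 2 * m * GF x) P volume :=
    (hint1.const_mul _)
  have hexp : ∀ x : Fin n → ℝ, (GF x - m) ^ 2 = GF x ^ 2 - 2 * m * GF x + m ^ 2 := by
    intro x; ring
  calc (1 / a₀) * (∫ x in P, (GF x - m) ^ 2)
      = (1 / a₀) * (∫ x in P, (GF x ^ 2 - 2 * m * GF x + m ^ 2)) := by
        simp_rw [hexp]
    _ = (1 / a₀) * ((∫ x in P, GF x ^ 2) - (∫ x in P, 2 * m * GF x)
          + (∫ x in P, (m ^ 2 : ℝ))) := by
        have hA : IntegrableOn (fun x => GF x ^ 2 - 2 * m * GF x) P volume :=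
          hint2.sub hconst2
        rw [integral_add hA hconst, integral_sub hint2 hconst2]
    _ = (1 / a₀) * (c₀ - 2 * m * b₀ + a₀ * m ^ 2) := by
        rw [hG2, integral_const_mul, hG1, setIntegral_const, measureReal_def, hvol, smul_eq_mul]
    _ = (c₀ * a₀ - b₀ ^ 2) / a₀ ^ 2 := by
        rw [hm]; field_simp; ring
end
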